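/- Under the hypotheses of the right-ideal decomposition, the map sending a = P₊a₀⁺ + P₊e a₁⁺ + P₋a₀⁻ + P₋e a₁⁻ to the 2×2 matrix [[a₀⁺, α(a₁⁺)], [a₁⁻, α(a₀⁻)]] over the subalgebra Cl(p,q) is multiplicative: the matrix of a product ab equals the product of the matrices of a and b. -/
import Mathlib

open CliffordAlgebra

theorem aux_comm {K V : Type*} [Field K] [AddCommGroup V] [Module K V]
    (Q : QuadraticForm K V) (w : V) (P : Set V)
    (hP : ∀ v ∈ P, QuadraticMap.polar Q v w = 0)
    {s : CliffordAlgebra Q} (hs : s ∈ Algebra.adjoin K (ι Q '' P)) :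
    ι Q w * s = involute s * ι Q w := by
  induction hs using Algebra.adjoin_induction with
  | mem x hx =>
    obtain ⟨v, hv, rfl⟩ := hx
    have h := CliffordAlgebra.ι_mul_ι_add_swap (Q := Q) w v
    rw [QuadraticMap.polar_comm, hP v hv, map_zero] at h
    rw [involute_ι, neg_mul]
    exact eq_neg_of_add_eq_zero_left h
  | algebraMap r => simp [Algebra.commutes]
  | add x y hx hy ihx ihy => simp [mul_add, add_mul, ihx, ihy]
  | mul x y hx hy ihx ihy =>
    rw [← mul_assoc, ihx, mul_assoc, ihy, ← mul_assoc, map_mul]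

theorem aux_inv_mem {K V : Type*} [Field K] [AddCommGroup V] [Module K V]
    (Q : QuadraticForm K V) (P : Set V)
    {s : CliffordAlgebra Q} (hs : s ∈ Algebra.adjoin K (ι Q '' P)) :
    involute s ∈ Algebra.adjoin K (ι Q '' P) := by
  induction hs using Algebra.adjoin_induction with
  | mem x hx =>
    obtain ⟨v, hv, rfl⟩ := hx
    rw [involute_ι]
    exact neg_mem (Algebra.subset_adjoin ⟨v, hv, rfl⟩)
  | algebraMap r => simpa using algebraMap_mem _ r
  | add x y hx hy ihx ihy => simpa [map_add] using add_mem ihx ihy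
  | mul x y hx hy ihx ihy => simpa [map_mul] using mul_mem ihx ihy

theorem stmt7 {K V : Type*} [Field K] [AddCommGroup V] [Module K V]
    (hK : (2 : K) ≠ 0) (Q : QuadraticForm K V) (e f : V)
    (he : Q e = 1) (hf : Q f = -1) (horth : QuadraticMap.polar Q e f = 0)
    (S : Subalgebra K (CliffordAlgebra Q))
    (hS : S = Algebra.adjoin K (ι Q ''
      {v : V | QuadraticMap.polar Q v e = 0 ∧ QuadraticMap.polar Q v f = 0}))
    (E T Pp Pm : CliffordAlgebra Q)
    (hE : E = ι Q e) (hT : T = ι Q f)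
    (hPp : Pp = (2 : K)⁻¹ • (1 + T * E)) (hPm : Pm = (2 : K)⁻¹ • (1 - T * E))
    (a0p a1p a0m a1m b0p b1p b0m b1m c0p c1p c0m c1m : CliffordAlgebra Q)
    (ha0p : a0p ∈ S) (ha1p : a1p ∈ S) (ha0m : a0m ∈ S) (ha1m : a1m ∈ S)
    (hb0p : b0p ∈ S) (hb1p : b1p ∈ S) (hb0m : b0m ∈ S) (hb1m : b1m ∈ S)
    (hc0p : c0p ∈ S) (hc1p : c1p ∈ S) (hc0m : c0m ∈ S) (hc1m : c1m ∈ S)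
    (a b : CliffordAlgebra Q)
    (ha : a = Pp * a0p + Pp * E * a1p + Pm * a0m + Pm * E * a1m)
    (hb : b = Pp * b0p + Pp * E * b1p + Pm * b0m + Pm * E * b1m)
    (hc : a * b = Pp * c0p + Pp * E * c1p + Pm * c0m + Pm * E * c1m) :
    (!![c0p, involute c1p; c1m, involute c0m] : Matrix (Fin 2) (Fin 2) (CliffordAlgebra Q)) =
      !![a0p, involute a1p; a1m, involute a0m] * !![b0p, involute b1p; b1m, involute b0m] := by
  -- basic structural identities
  have hEE : E * E = 1 := by rw [hE, ι_sq_scalar, he, map_one]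
  have hTT : T * T = -1 := by rw [hT, ι_sq_scalar, hf, map_neg, map_one]
  have hET : E * T = -(T * E) := by
    rw [hE, hT]
    have h := CliffordAlgebra.ι_mul_ι_add_swap (Q := Q) e f
    rw [horth, map_zero] at h
    exact eq_neg_of_add_eq_zero_left h
  have hiE : involute E = -E := by rw [hE, involute_ι]
  have hiT : involute T = -T := by rw [hT, involute_ι]
  have hUU : (T * E) * (T * E) = 1 := by
    have h1 : T * E * (T * E) = T * (E * T) * E := by noncomm_ring
    rw [h1, hET, mul_neg, ← mul_assoc, hTT]
    simp [hEE]
  have hUE : (T * E) * E = T := by rw [mul_assoc, hEE, mul_one]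
  have hEU : E * (T * E) = -T := by rw [← mul_assoc, hET, neg_mul, hUE]
  have hhalf : (2 : K)⁻¹ * (2 : K)⁻¹ * 2 = (2 : K)⁻¹ := by field_simp
  have hPpPp : Pp * Pp = Pp := by
    rw [hPp, smul_mul_smul_comm]
    have h2 : (1 + T * E) * (1 + T * E) = 1 + T*E + (T*E) + (T*E)*(T*E) := by noncomm_ring
    rw [h2, hUU, show (1:CliffordAlgebra Q) + T*E + (T*E) + 1 = (2:K) • (1 + T*E) by
      rw [two_smul]; abel, smul_smul, hhalf]
  have hPmPm : Pm * Pm = Pm := by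
    rw [hPm, smul_mul_smul_comm]
    have h2 : (1 - T * E) * (1 - T * E) = 1 - T*E - (T*E) + (T*E)*(T*E) := by noncomm_ring
    rw [h2, hUU, show (1:CliffordAlgebra Q) - T*E - (T*E) + 1 = (2:K) • (1 - T*E) by
      rw [two_smul]; abel, smul_smul, hhalf]
  have hPpPm : Pp * Pm = 0 := by
    rw [hPp, hPm, smul_mul_smul_comm]
    have h2 : (1 + T * E) * (1 - T * E) = 1 + T*E - (T*E) - (T*E)*(T*E) := by noncomm_ring
    rw [h2, hUU, show (1:CliffordAlgebra Q) + T*E - (T*E) - 1 = 0 by abel, smul_zero]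
  have hPmPp : Pm * Pp = 0 := by
    rw [hPp, hPm, smul_mul_smul_comm]
    have h2 : (1 - T * E) * (1 + T * E) = 1 - T*E + (T*E) - (T*E)*(T*E) := by noncomm_ring
    rw [h2, hUU, show (1:CliffordAlgebra Q) - T*E + (T*E) - 1 = 0 by abel, smul_zero]
  have hEPp : E * Pp = Pm * E := by
    rw [hPp, hPm, mul_smul_comm, smul_mul_assoc, mul_add, mul_one, hEU, sub_mul, one_mul, hUE]
    congr 1; abel
  have hEPm : E * Pm = Pp * E := by
    rw [hPp, hPm, mul_smul_comm, smul_mul_assoc, mul_sub, mul_one, hEU, add_mul, one_mul, hUE]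
    congr 1; abel
  -- commutation with elements of S
  have sinv : ∀ s ∈ S, involute s ∈ S := by
    intro s hs; rw [hS] at hs ⊢; exact aux_inv_mem Q _ hs
  have commE : ∀ s ∈ S, E * s = involute s * E := by
    intro s hs; rw [hS] at hs; rw [hE]; exact aux_comm Q e _ (fun v hv => hv.1) hs
  have commT : ∀ s ∈ S, T * s = involute s * T := by
    intro s hs; rw [hS] at hs; rw [hT]; exact aux_comm Q f _ (fun v hv => hv.2) hs
  have sE : ∀ s ∈ S, s * E = E * involute s := by
    intro s hs
    have h := commE _ (sinv s hs)
    rw [involute_involute] at h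
    exact h.symm
  have sT : ∀ s ∈ S, s * T = T * involute s := by
    intro s hs
    have h := commT _ (sinv s hs)
    rw [involute_involute] at h
    exact h.symm
  have sU : ∀ s ∈ S, s * (T * E) = (T * E) * s := by
    intro s hs
    rw [← mul_assoc, sT s hs, mul_assoc, sE _ (sinv s hs), involute_involute, ← mul_assoc]
  have sPp : ∀ s ∈ S, s * Pp = Pp * s := by
    intro s hs
    rw [hPp, mul_smul_comm, smul_mul_assoc]
    congr 1
    rw [mul_add, mul_one, add_mul, one_mul, sU s hs]
  have sPm : ∀ s ∈ S, s * Pm = Pm * s := by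
    intro s hs
    rw [hPm, mul_smul_comm, smul_mul_assoc]
    congr 1
    rw [mul_sub, mul_one, sub_mul, one_mul, sU s hs]
  -- ∀ z versions (right-assoc normal forms)
  have sEz : ∀ z : CliffordAlgebra Q, E*(E*z) = z := fun z => by
    rw [← mul_assoc, hEE, one_mul]
  have sEPpz : ∀ z : CliffordAlgebra Q, E*(Pp*z) = Pm*(E*z) := fun z => by
    rw [← mul_assoc, hEPp, mul_assoc]
  have sEPmz : ∀ z : CliffordAlgebra Q, E*(Pm*z) = Pp*(E*z) := fun z => by
    rw [← mul_assoc, hEPm, mul_assoc]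
  have sPpPpz : ∀ z : CliffordAlgebra Q, Pp*(Pp*z) = Pp*z := fun z => by
    rw [← mul_assoc, hPpPp]
  have sPmPmz : ∀ z : CliffordAlgebra Q, Pm*(Pm*z) = Pm*z := fun z => by
    rw [← mul_assoc, hPmPm]
  have sPpPmz : ∀ z : CliffordAlgebra Q, Pp*(Pm*z) = 0 := fun z => by
    rw [← mul_assoc, hPpPm, zero_mul]
  have sPmPpz : ∀ z : CliffordAlgebra Q, Pm*(Pp*z) = 0 := fun z => by
    rw [← mul_assoc, hPmPp, zero_mul]
  have mPpz : ∀ s ∈ S, ∀ z, s*(Pp*z) = Pp*(s*z) := fun s hs z => by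
    rw [← mul_assoc, sPp s hs, mul_assoc]
  have mPmz : ∀ s ∈ S, ∀ z, s*(Pm*z) = Pm*(s*z) := fun s hs z => by
    rw [← mul_assoc, sPm s hs, mul_assoc]
  have sETz : ∀ z : CliffordAlgebra Q, E*(T*z) = -(T*(E*z)) := fun z => by
    rw [← mul_assoc, hET, neg_mul, mul_assoc]
  have mEz : ∀ s ∈ S, ∀ z, s*(E*z) = E*(involute s*z) := fun s hs z => by
    rw [← mul_assoc, sE s hs, mul_assoc]
  -- the product decomposition
  have expand : a*b = Pp*(a0p*b0p + involute a1p*b1m) + Pp*(E*(involute a0p*b1p + a1p*b0m))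
      + Pm*(involute a1m*b1p + a0m*b0m) + Pm*(E*(a1m*b0p + involute a0m*b1m)) := by
    rw [ha, hb]
    simp only [mul_add, add_mul, mul_assoc,
      mPpz a0p ha0p, mPmz a0p ha0p, mEz a0p ha0p,
      mPpz a1p ha1p, mPmz a1p ha1p, mEz a1p ha1p,
      mPpz a0m ha0m, mPmz a0m ha0m, mEz a0m ha0m,
      mPpz a1m ha1m, mPmz a1m ha1m, mEz a1m ha1m,
      sEz, sEPpz, sEPmz, sPpPpz, sPpPmz, sPmPpz, sPmPmz,
      add_zero, zero_add, mul_zero, zero_mul]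
    abel
  -- killing lemmas
  have killPp : ∀ s ∈ S, Pp * s = 0 → s = 0 := by
    intro s hs h
    have h1 : (1 + T*E) * s = 0 := by
      rw [hPp, smul_mul_assoc] at h
      exact (smul_eq_zero.mp h).resolve_left (inv_ne_zero hK)
    have h1' : s + T*(E*s) = 0 := by rw [← h1]; noncomm_ring
    have h2 : involute s + T*(E*involute s) = 0 := by
      have h' := congrArg involute h1'
      simp only [map_add, map_mul, map_zero, hiT, hiE, neg_mul, mul_neg, neg_neg] at h'
      exact h'
    have h3 : involute s - T*(E*involute s) = 0 := by
      have h' := congrArg (fun x => E * x * E) h1'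
      simp only [mul_zero, zero_mul, mul_add, add_mul, mul_assoc] at h'
      rw [sE s hs] at h'
      simp only [sEz, sETz] at h'
      simpa [sub_eq_add_neg] using h'
    have h5 : involute s + involute s = 0 := by
      have h4 : (involute s + T*(E*involute s)) + (involute s - T*(E*involute s))
          = involute s + involute s := by abel
      rw [h2, h3, add_zero] at h4
      exact h4.symm
    have h6 : involute s = 0 := by
      have h7 : (2:K) • involute s = 0 := by rw [two_smul]; exact h5
      exact (smul_eq_zero.mp h7).resolve_left hK
    have := congrArg involute h6
    rwa [involute_involute, map_zero] at this
  have killPm : ∀ s ∈ S, Pm * s = 0 → s = 0 := by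
    intro s hs h
    have h1 : (1 - T*E) * s = 0 := by
      rw [hPm, smul_mul_assoc] at h
      exact (smul_eq_zero.mp h).resolve_left (inv_ne_zero hK)
    have h1' : s - T*(E*s) = 0 := by rw [← h1]; noncomm_ring
    have h2 : involute s - T*(E*involute s) = 0 := by
      have h' := congrArg involute h1'
      simp only [map_sub, map_mul, map_zero, hiT, hiE, neg_mul, mul_neg, neg_neg] at h'
      exact h'
    have h3 : involute s + T*(E*involute s) = 0 := by
      have h' := congrArg (fun x => E * x * E) h1'
      simp only [mul_zero, zero_mul, mul_sub, sub_mul, mul_assoc] at h'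
      rw [sE s hs] at h'
      simp only [sEz, sETz] at h'
      simpa [sub_neg_eq_add] using h'
    have h5 : involute s + involute s = 0 := by
      have h4 : (involute s - T*(E*involute s)) + (involute s + T*(E*involute s))
          = involute s + involute s := by abel
      rw [h2, h3, add_zero] at h4
      exact h4.symm
    have h6 : involute s = 0 := by
      have h7 : (2:K) • involute s = 0 := by rw [two_smul]; exact h5
      exact (smul_eq_zero.mp h7).resolve_left hK
    have := congrArg involute h6
    rwa [involute_involute, map_zero] at this
  -- memberships
  have hd0p : a0p*b0p + involute a1p*b1m ∈ S :=
    S.add_mem (S.mul_mem ha0p hb0p) (S.mul_mem (sinv _ ha1p) hb1m)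
  have hd1p : involute a0p*b1p + a1p*b0m ∈ S :=
    S.add_mem (S.mul_mem (sinv _ ha0p) hb1p) (S.mul_mem ha1p hb0m)
  have hd0m : involute a1m*b1p + a0m*b0m ∈ S :=
    S.add_mem (S.mul_mem (sinv _ ha1m) hb1p) (S.mul_mem ha0m hb0m)
  have hd1m : a1m*b0p + involute a0m*b1m ∈ S :=
    S.add_mem (S.mul_mem ha1m hb0p) (S.mul_mem (sinv _ ha0m) hb1m)
  have hx0 : c0p - (a0p*b0p + involute a1p*b1m) ∈ S := S.sub_mem hc0p hd0p
  have hx1 : c1p - (involute a0p*b1p + a1p*b0m) ∈ S := S.sub_mem hc1p hd1p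
  have hy0 : c0m - (involute a1m*b1p + a0m*b0m) ∈ S := S.sub_mem hc0m hd0m
  have hy1 : c1m - (a1m*b0p + involute a0m*b1m) ∈ S := S.sub_mem hc1m hd1m
  -- the difference is zero
  have h0 : Pp*(c0p - (a0p*b0p + involute a1p*b1m))
      + Pp*(E*(c1p - (involute a0p*b1p + a1p*b0m)))
      + Pm*(c0m - (involute a1m*b1p + a0m*b0m))
      + Pm*(E*(c1m - (a1m*b0p + involute a0m*b1m))) = 0 := by
    have hcc := hc.symm.trans expand
    simp only [mul_assoc] at hcc
    calc Pp*(c0p - (a0p*b0p + involute a1p*b1m))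
          + Pp*(E*(c1p - (involute a0p*b1p + a1p*b0m)))
          + Pm*(c0m - (involute a1m*b1p + a0m*b0m))
          + Pm*(E*(c1m - (a1m*b0p + involute a0m*b1m)))
        = (Pp*c0p + Pp*(E*c1p) + Pm*c0m + Pm*(E*c1m))
          - (Pp*(a0p*b0p + involute a1p*b1m) + Pp*(E*(involute a0p*b1p + a1p*b0m))
             + Pm*(involute a1m*b1p + a0m*b0m) + Pm*(E*(a1m*b0p + involute a0m*b1m))) := by
          simp only [mul_sub]; abel
      _ = 0 := by rw [hcc, sub_self]
  -- extraction by sandwiching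
  have g1 : Pp*(c0p - (a0p*b0p + involute a1p*b1m)) = 0 := by
    have h' := congrArg (fun z => Pp * (z * Pp)) h0
    simp only [mul_zero, zero_mul, add_mul, mul_add, mul_assoc,
      sPp _ hx0, sPp _ hx1, sPp _ hy0, sPp _ hy1, sPm _ hx0, sPm _ hx1, sPm _ hy0, sPm _ hy1,
      sPpPpz, sPpPmz, sPmPpz, sPmPmz, sEPpz, sEPmz, sEz, add_zero, zero_add] at h'
    exact h'
  have g2 : Pp*(E*(c1p - (involute a0p*b1p + a1p*b0m))) = 0 := by
    have h' := congrArg (fun z => Pp * (z * Pm)) h0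
    simp only [mul_zero, zero_mul, add_mul, mul_add, mul_assoc,
      sPp _ hx0, sPp _ hx1, sPp _ hy0, sPp _ hy1, sPm _ hx0, sPm _ hx1, sPm _ hy0, sPm _ hy1,
      sPpPpz, sPpPmz, sPmPpz, sPmPmz, sEPpz, sEPmz, sEz, add_zero, zero_add] at h'
    exact h'
  have g3 : Pm*(c0m - (involute a1m*b1p + a0m*b0m)) = 0 := by
    have h' := congrArg (fun z => Pm * (z * Pm)) h0
    simp only [mul_zero, zero_mul, add_mul, mul_add, mul_assoc,
      sPp _ hx0, sPp _ hx1, sPp _ hy0, sPp _ hy1, sPm _ hx0, sPm _ hx1, sPm _ hy0, sPm _ hy1,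
      sPpPpz, sPpPmz, sPmPpz, sPmPmz, sEPpz, sEPmz, sEz, add_zero, zero_add] at h'
    exact h'
  have g4 : Pm*(E*(c1m - (a1m*b0p + involute a0m*b1m))) = 0 := by
    have h' := congrArg (fun z => Pm * (z * Pp)) h0
    simp only [mul_zero, zero_mul, add_mul, mul_add, mul_assoc,
      sPp _ hx0, sPp _ hx1, sPp _ hy0, sPp _ hy1, sPm _ hx0, sPm _ hx1, sPm _ hy0, sPm _ hy1,
      sPpPpz, sPpPmz, sPmPpz, sPmPmz, sEPpz, sEPmz, sEz, add_zero, zero_add] at h'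
    exact h'
  have q0 : c0p = a0p*b0p + involute a1p*b1m := sub_eq_zero.mp (killPp _ hx0 g1)
  have q2 : c0m = involute a1m*b1p + a0m*b0m := sub_eq_zero.mp (killPm _ hy0 g3)
  have q1 : c1p = involute a0p*b1p + a1p*b0m := by
    have g2' : Pp * involute (c1p - (involute a0p*b1p + a1p*b0m)) = 0 := by
      have h' := congrArg (fun z => z * E) g2
      simp only [zero_mul, mul_assoc, sE _ hx1, sEz] at h'
      exact h'
    have h6 := killPp _ (sinv _ hx1) g2'
    have h7 := congrArg involute h6
    rw [involute_involute, map_zero] at h7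
    exact sub_eq_zero.mp h7
  have q3 : c1m = a1m*b0p + involute a0m*b1m := by
    have g4' : Pm * involute (c1m - (a1m*b0p + involute a0m*b1m)) = 0 := by
      have h' := congrArg (fun z => z * E) g4
      simp only [zero_mul, mul_assoc, sE _ hy1, sEz] at h'
      exact h'
    have h6 := killPm _ (sinv _ hy1) g4'
    have h7 := congrArg involute h6
    rw [involute_involute, map_zero] at h7
    exact sub_eq_zero.mp h7
  rw [q0, q1, q2, q3, Matrix.mul_fin_two]
  simp only [map_add, map_mul, involute_involute]
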